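/- Let p be a prime and x ∈ ℂ_p^* with |x|_p = 1. Then there exists a strictly increasing sequence of positive integers (n_i) such that x^{n_i} → 1 in ℂ_p; i.e. every element of the unit circle U(1) = {x ∈ ℂ_p : |x|_p = 1} lies in G_m(ℂ_p)_f. -/

import Mathlib

/-!
Approximate `x` by an algebraic `y`; since the norm is nonarchimedean, `‖y‖ = 1` and
`‖xⁿ - yⁿ‖ ≤ ‖x - y‖` for all `n`. The field `ℚ_p(y)` is finite-dimensional over the locally
compact field `ℚ_p`, so its unit sphere is a compact group, in which `1` is a cluster point of
the powers of any element. Hence `yⁿ`, and with it `xⁿ`, comes arbitrarily close to `1` for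
infinitely many `n`.
-/

open Filter Metric IntermediateField

theorem IsUltrametricDist.norm_pow_sub_pow_le {R : Type*} [SeminormedRing R] [NormOneClass R]
    [IsUltrametricDist R] {a b : R} (ha : ‖a‖ ≤ 1) (hb : ‖b‖ ≤ 1) (n : ℕ) :
    ‖a ^ n - b ^ n‖ ≤ ‖a - b‖ := by
  induction n with
  | zero => simp
  | succ n ih =>
    have hsplit : a ^ (n + 1) - b ^ (n + 1) = a * (a ^ n - b ^ n) + (a - b) * b ^ n := by
      rw [pow_succ', pow_succ']; noncomm_ring
    have hbn : ‖b ^ n‖ ≤ 1 := (_root_.norm_pow_le b n).trans (pow_le_one₀ (norm_nonneg b) hb)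
    rw [hsplit]
    refine (norm_add_le_max _ _).trans (max_le ?_ ?_)
    · calc ‖a * (a ^ n - b ^ n)‖ ≤ ‖a‖ * ‖a ^ n - b ^ n‖ := norm_mul_le _ _
        _ ≤ 1 * ‖a - b‖ := mul_le_mul ha ih (norm_nonneg _) zero_le_one
        _ = ‖a - b‖ := one_mul _
    · calc ‖(a - b) * b ^ n‖ ≤ ‖a - b‖ * ‖b ^ n‖ := norm_mul_le _ _
        _ ≤ ‖a - b‖ * 1 := mul_le_mul_of_nonneg_left hbn (norm_nonneg _)
        _ = ‖a - b‖ := mul_one _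

theorem IsUltrametricDist.norm_eq_of_norm_sub_lt {S : Type*} [SeminormedAddCommGroup S]
    [IsUltrametricDist S] {x y : S} (h : ‖y - x‖ < ‖x‖) : ‖y‖ = ‖x‖ := by
  have := norm_add_eq_max_of_norm_ne_norm h.ne'
  rwa [add_sub_cancel, max_eq_left h.le] at this

section NormedAlgebra

variable {𝕜 F : Type*} [NontriviallyNormedField 𝕜] [LocallyCompactSpace 𝕜]
  [NormedField F] [NormedAlgebra 𝕜 F]

theorem IsIntegral.mapClusterPt_one_atTop_pow {y : F} (hy : IsIntegral 𝕜 y) (hy1 : ‖y‖ = 1) :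
    MapClusterPt 1 atTop (y ^ · : ℕ → F) := by
  have := adjoin.finiteDimensional hy
  have := FiniteDimensional.proper 𝕜 𝕜⟮y⟯
  let z : sphere (0 : 𝕜⟮y⟯) 1 :=
    ⟨⟨y, mem_adjoin_simple_self 𝕜 y⟩, by simpa using hy1⟩
  have hcoe : Continuous fun w : sphere (0 : 𝕜⟮y⟯) 1 => ((w : 𝕜⟮y⟯) : F) := by fun_prop
  simpa [Function.comp_def, z] using
    (_root_.mapClusterPt_one_atTop_pow z).continuousAt_comp hcoe.continuousAt

theorem mapClusterPt_one_atTop_pow_of_dense_isAlgebraic [IsUltrametricDist F]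
    (hdense : Dense {y : F | IsAlgebraic 𝕜 y}) {x : F} (hx : ‖x‖ = 1) :
    MapClusterPt 1 atTop (x ^ · : ℕ → F) := by
  rw [mapClusterPt_iff_frequently]
  intro s hs
  obtain ⟨ε, hε, hball⟩ := Metric.mem_nhds_iff.mp hs
  obtain ⟨y, hy, hxy⟩ := hdense.exists_dist_lt x (lt_min hε one_pos)
  rw [dist_eq_norm, lt_min_iff] at hxy
  have hy1 : ‖y‖ = 1 :=
    hx ▸ IsUltrametricDist.norm_eq_of_norm_sub_lt (by rw [norm_sub_rev, hx]; exact hxy.2)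
  have hyrec := mapClusterPt_iff_frequently.mp (hy.isIntegral.mapClusterPt_one_atTop_pow hy1)
  refine (hyrec _ (ball_mem_nhds 1 hε)).mono fun n hn => hball ?_
  have hxyn : dist (x ^ n) (y ^ n) < ε := by
    rw [dist_eq_norm]
    exact (IsUltrametricDist.norm_pow_sub_pow_le hx.le hy1.le n).trans_lt hxy.1
  exact (IsUltrametricDist.dist_triangle_max _ (y ^ n) _).trans_lt (max_lt hxyn hn)

end NormedAlgebra

theorem statement12_general (p : ℕ) [Fact p.Prime] {Cp : Type*}
    [NontriviallyNormedField Cp] [IsUltrametricDist Cp]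
    [Algebra ℚ_[p] Cp]
    (hiso : ∀ x : ℚ_[p], ‖algebraMap ℚ_[p] Cp x‖ = ‖x‖)
    (hdense : Dense {x : Cp | IsAlgebraic ℚ_[p] x})
    (x : Cp) (hx : ‖x‖ = 1) :
    ∃ n : ℕ → ℕ, StrictMono n ∧ 0 < n 0 ∧
      Filter.Tendsto (fun i => x ^ n i) Filter.atTop (nhds 1) := by
  let : NormedAlgebra ℚ_[p] Cp :=
    { norm_smul_le := fun c v => by rw [Algebra.smul_def, norm_mul, hiso] }
  obtain ⟨ψ, hψ, hlim⟩ :=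
    (mapClusterPt_one_atTop_pow_of_dense_isAlgebraic hdense hx).tendsto_subseq
  exact ⟨fun i => ψ (i + 1), fun i j hij => hψ (Nat.succ_lt_succ hij),
    (Nat.zero_le _).trans_lt (hψ Nat.zero_lt_one), hlim.comp (tendsto_add_atTop_nat 1)⟩

theorem statement12 (p : ℕ) [Fact p.Prime] {Cp : Type*}
    [NontriviallyNormedField Cp] [CompleteSpace Cp] [IsAlgClosed Cp] [IsUltrametricDist Cp]
    [CharZero Cp] [Algebra ℚ_[p] Cp]
    (hiso : ∀ x : ℚ_[p], ‖algebraMap ℚ_[p] Cp x‖ = ‖x‖)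
    (hdense : Dense {x : Cp | IsAlgebraic ℚ_[p] x})
    (x : Cp) (hx : ‖x‖ = 1) :
    ∃ n : ℕ → ℕ, StrictMono n ∧ 0 < n 0 ∧
      Filter.Tendsto (fun i => x ^ n i) Filter.atTop (nhds 1) :=
  statement12_general p hiso hdense x hx
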